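/- arXiv:1502.08013 — 2 statements merged into one kernel-verified Lean document; each statement's English description precedes it below -/
import Mathlib

section
/- For every nonnegative integer N, the Hermite polynomial H_N(x) expands in Laguerre polynomials as H_N(x) = N! 2^N Σ_{m=0}^{N} d_{N,m} ((-N)_m / m!) L_m(x), where d_{N,m} = Σ_{t=0}^{⌊(N-m)/2⌋} [(-(N-m)/2)_t (-(N-m-1)/2)_t / ((-N/2)_t (-(N-1)/2)_t)] · (-1/4)^t / t!. -/
open Finset

/-- Pochhammer (rising factorial) symbol on the reals. -/
noncomputable def poch (a : ℝ) (n : ℕ) : ℝ := ∏ i ∈ Finset.range n, (a + i)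

/-- Physicists' Hermite polynomial. -/
noncomputable def hermiteP (N : ℕ) (x : ℝ) : ℝ :=
  (N.factorial : ℝ) * ∑ k ∈ Finset.range (N / 2 + 1),
    (-1 : ℝ) ^ k * (2 * x) ^ (N - 2 * k) / ((k.factorial : ℝ) * ((N - 2 * k).factorial : ℝ))

/-- Laguerre polynomial (α = 0). -/
noncomputable def laguerreP (n : ℕ) (x : ℝ) : ℝ :=
  ∑ k ∈ Finset.range (n + 1), poch (-(n : ℝ)) k * x ^ k / ((k.factorial : ℝ)) ^ 2

lemma poch_succ (a : ℝ) (n : ℕ) : poch a (n + 1) = poch a n * (a + n) := by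
  simp [poch, Finset.prod_range_succ]

lemma fact_ne (n : ℕ) : ((n.factorial : ℝ)) ≠ 0 := Nat.cast_ne_zero.2 n.factorial_ne_zero

lemma poch_neg {n k : ℕ} (h : k ≤ n) :
    poch (-(n : ℝ)) k = (-1) ^ k * (n.factorial : ℝ) / ((n - k).factorial : ℝ) := by
  induction k with
  | zero => simp [poch, div_self (fact_ne n)]
  | succ k ih =>
    obtain ⟨p, rfl⟩ : ∃ p, n = p + (k + 1) := ⟨n - (k + 1), by omega⟩
    have hk : k ≤ p + (k + 1) := by omega
    rw [poch_succ, ih hk, show p + (k + 1) - k = p + 1 from by omega,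
      show p + (k + 1) - (k + 1) = p from by omega, Nat.factorial_succ]
    have hp : ((p.factorial : ℝ)) ≠ 0 := fact_ne p
    push_cast
    field_simp
    ring

lemma poch_dup (x : ℝ) (t : ℕ) :
    poch (x / 2) t * poch ((x + 1) / 2) t * 4 ^ t = poch x (2 * t) := by
  induction t with
  | zero => simp [poch]
  | succ t ih =>
    rw [show 2 * (t + 1) = (2 * t) + 1 + 1 from by ring, poch_succ, poch_succ, poch_succ,
      poch_succ, ← ih]
    push_cast
    ring

noncomputable def Tm (N : ℕ) (x : ℝ) (m t j : ℕ) : ℝ :=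
  (-1 : ℝ) ^ (m + t + j) * ((N - 2 * t).factorial : ℝ) * x ^ j /
    (((N - m - 2 * t).factorial : ℝ) * 4 ^ t * (t.factorial : ℝ) * ((m - j).factorial : ℝ) *
      ((j.factorial : ℝ)) ^ 2)

noncomputable def Fm (N : ℕ) (x : ℝ) (m t j : ℕ) : ℝ :=
  if m + 2 * t ≤ N ∧ j ≤ m then Tm N x m t j else 0

lemma term_eq (N : ℕ) (x : ℝ) {m t j : ℕ} (hm : m ≤ N) (ht : m + 2 * t ≤ N) (hj : j ≤ m) :
    (poch (-((N : ℝ) - m) / 2) t * poch (-((N : ℝ) - m - 1) / 2) t /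
        (poch (-(N : ℝ) / 2) t * poch (-((N : ℝ) - 1) / 2) t)) *
      (-(1 / 4) : ℝ) ^ t / (t.factorial : ℝ) *
      (poch (-(N : ℝ)) m / (m.factorial : ℝ)) *
      (poch (-(m : ℝ)) j * x ^ j / ((j.factorial : ℝ)) ^ 2)
    = Tm N x m t j := by
  have h4t : ((4 : ℝ) ^ t) ≠ 0 := by positivity
  have e1 : -((N : ℝ) - m) / 2 = (-(((N - m : ℕ) : ℝ))) / 2 := by
    rw [Nat.cast_sub hm]
  have e2 : -((N : ℝ) - m - 1) / 2 = ((-(((N - m : ℕ) : ℝ))) + 1) / 2 := by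
    rw [Nat.cast_sub hm]; ring
  have e4 : -((N : ℝ) - 1) / 2 = ((-((N : ℕ) : ℝ)) + 1) / 2 := by ring
  have q1 : poch (-((N : ℝ) - m) / 2) t * poch (-((N : ℝ) - m - 1) / 2) t
      = poch (-(((N - m : ℕ) : ℝ))) (2 * t) / 4 ^ t := by
    rw [eq_div_iff h4t, e1, e2, poch_dup]
  have q2 : poch (-(N : ℝ) / 2) t * poch (-((N : ℝ) - 1) / 2) t
      = poch (-((N : ℕ) : ℝ)) (2 * t) / 4 ^ t := by
    rw [eq_div_iff h4t, e4, show -(N : ℝ) / 2 = (-((N : ℕ) : ℝ)) / 2 from by norm_num,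
      poch_dup]
  have h2tN : 2 * t ≤ N := by omega
  have h2tNm : 2 * t ≤ N - m := by omega
  have hv1 : poch (-(((N - m : ℕ) : ℝ))) (2 * t)
      = ((N - m).factorial : ℝ) / ((N - m - 2 * t).factorial : ℝ) := by
    rw [poch_neg h2tNm, pow_mul]
    norm_num
  have hv2 : poch (-((N : ℕ) : ℝ)) (2 * t)
      = (N.factorial : ℝ) / ((N - 2 * t).factorial : ℝ) := by
    rw [poch_neg h2tN, pow_mul]
    norm_num
  have hv3 : poch (-(N : ℝ)) m = (-1) ^ m * (N.factorial : ℝ) / ((N - m).factorial : ℝ) :=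
    poch_neg hm
  have hv4 : poch (-(m : ℝ)) j = (-1) ^ j * (m.factorial : ℝ) / ((m - j).factorial : ℝ) :=
    poch_neg hj
  rw [q1, q2, hv1, hv2, hv3, hv4, show (-(1 / 4) : ℝ) = (-1) / 4 from by norm_num, div_pow,
    Tm]
  have n1 := fact_ne (N - m - 2 * t)
  have n2 := fact_ne (N - 2 * t)
  have n3 := fact_ne (N - m)
  have n4 := fact_ne N
  have n5 := fact_ne m
  have n6 := fact_ne t
  have n7 := fact_ne (m - j)
  have n8 := fact_ne j
  field_simp
  ring

lemma msum (N : ℕ) (x : ℝ) (t j : ℕ) (h : j + 2 * t ≤ N) :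
    ∑ m ∈ range (N + 1), Fm N x m t j
      = ∑ s ∈ range (N - 2 * t - j + 1), Tm N x (j + s) t j := by
  have hfil : (range (N + 1)).filter (fun m => m + 2 * t ≤ N ∧ j ≤ m)
      = Finset.Ico j (N - 2 * t + 1) := by
    ext m
    simp only [Finset.mem_filter, Finset.mem_range, Finset.mem_Ico]
    omega
  calc ∑ m ∈ range (N + 1), Fm N x m t j
      = ∑ m ∈ (range (N + 1)).filter (fun m => m + 2 * t ≤ N ∧ j ≤ m), Tm N x m t j := by
        rw [Finset.sum_filter]; rfl
    _ = ∑ s ∈ range (N - 2 * t + 1 - j), Tm N x (j + s) t j := by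
        rw [hfil, Finset.sum_Ico_eq_sum_range]
    _ = ∑ s ∈ range (N - 2 * t - j + 1), Tm N x (j + s) t j := by
        rw [show N - 2 * t + 1 - j = N - 2 * t - j + 1 from by omega]

lemma msum_zero (N : ℕ) (x : ℝ) (t j : ℕ) (h : j + 2 * t ≤ N) (hne : j ≠ N - 2 * t) :
    ∑ m ∈ range (N + 1), Fm N x m t j = 0 := by
  rw [msum N x t j h]
  set M := N - 2 * t - j with hM
  have hM1 : 1 ≤ M := by omega
  have key : ∑ s ∈ range (M + 1), ((-1 : ℝ) ^ s * (M.choose s : ℝ)) = 0 := by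
    have h0 := Int.alternating_sum_range_choose (n := M)
    rw [if_neg (by omega)] at h0
    exact_mod_cast congrArg (fun z : ℤ => (z : ℝ)) h0
  calc ∑ s ∈ range (M + 1), Tm N x (j + s) t j
      = ∑ s ∈ range (M + 1), ((-1 : ℝ) ^ s * (M.choose s : ℝ)) *
          ((-1 : ℝ) ^ (t + 2 * j) * ((N - 2 * t).factorial : ℝ) * x ^ j /
            ((M.factorial : ℝ) * 4 ^ t * (t.factorial : ℝ) * ((j.factorial : ℝ)) ^ 2)) := by
        refine Finset.sum_congr rfl fun s hs => ?_
        rw [mem_range, Nat.lt_succ_iff] at hs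
        simp only [Tm]
        rw [show N - (j + s) - 2 * t = M - s from by omega,
          show j + s - j = s from by omega]
        have hc : ((M.choose s : ℝ)) * (s.factorial : ℝ) * ((M - s).factorial : ℝ)
            = (M.factorial : ℝ) := by
          exact_mod_cast congrArg (fun z : ℕ => (z : ℝ))
            (Nat.choose_mul_factorial_mul_factorial hs)
        have hsign : (-1 : ℝ) ^ (j + s + t + j) = (-1) ^ s * (-1) ^ (t + 2 * j) := by
          rw [show j + s + t + j = s + (t + 2 * j) from by ring, pow_add]
        rw [hsign]
        have n1 := fact_ne (M - s)
        have n2 := fact_ne s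
        have n3 := fact_ne M
        have n6 := fact_ne t
        have n8 := fact_ne j
        have h4t : ((4 : ℝ) ^ t) ≠ 0 := by positivity
        field_simp
        rw [← hc]
        ring
    _ = 0 := by rw [← Finset.sum_mul, key, zero_mul]

lemma msum_single (N : ℕ) (x : ℝ) (t : ℕ) (ht : 2 * t ≤ N) :
    ∑ m ∈ range (N + 1), Fm N x m t (N - 2 * t)
      = (-1 : ℝ) ^ t * x ^ (N - 2 * t) /
          (4 ^ t * (t.factorial : ℝ) * (((N - 2 * t).factorial : ℝ))) := by
  rw [msum N x t (N - 2 * t) (by omega), show N - 2 * t - (N - 2 * t) + 1 = 1 from by omega,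
    Finset.sum_range_one]
  simp only [Tm, Nat.add_zero]
  rw [show N - (N - 2 * t) - 2 * t = 0 from by omega,
    show N - 2 * t - (N - 2 * t) = 0 from by omega, Nat.factorial_zero]
  have hsign : (-1 : ℝ) ^ (N - 2 * t + t + (N - 2 * t)) = (-1) ^ t := by
    rw [show N - 2 * t + t + (N - 2 * t) = 2 * (N - 2 * t) + t from by ring, pow_add,
      pow_mul]
    norm_num
  rw [hsign]
  have n1 := fact_ne (N - 2 * t)
  have n6 := fact_ne t
  have h4t : ((4 : ℝ) ^ t) ≠ 0 := by positivity
  field_simp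
  ring

/-- Connection formula for Hermite polynomials in series of Laguerre polynomials. -/
theorem hermite_in_laguerre (N : ℕ) (x : ℝ) :
    hermiteP N x =
      (N.factorial : ℝ) * 2 ^ N *
        ∑ m ∈ Finset.range (N + 1),
          (∑ t ∈ Finset.range ((N - m) / 2 + 1),
            (poch (-((N : ℝ) - m) / 2) t * poch (-((N : ℝ) - m - 1) / 2) t /
              (poch (-(N : ℝ) / 2) t * poch (-((N : ℝ) - 1) / 2) t)) *
            (-(1 / 4) : ℝ) ^ t / (t.factorial : ℝ)) *
          (poch (-(N : ℝ)) m / (m.factorial : ℝ)) * laguerreP m x := by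
  have stepA : ∀ m ∈ range (N + 1),
      (∑ t ∈ Finset.range ((N - m) / 2 + 1),
        (poch (-((N : ℝ) - m) / 2) t * poch (-((N : ℝ) - m - 1) / 2) t /
          (poch (-(N : ℝ) / 2) t * poch (-((N : ℝ) - 1) / 2) t)) *
        (-(1 / 4) : ℝ) ^ t / (t.factorial : ℝ)) *
      (poch (-(N : ℝ)) m / (m.factorial : ℝ)) * laguerreP m x
      = ∑ t ∈ range (N + 1), ∑ j ∈ range (N + 1), Fm N x m t j := by
    intro m hm
    rw [mem_range, Nat.lt_succ_iff] at hm
    rw [laguerreP, Finset.sum_mul, Finset.sum_mul]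
    have h1 : ∀ t ∈ range ((N - m) / 2 + 1),
        ((poch (-((N : ℝ) - m) / 2) t * poch (-((N : ℝ) - m - 1) / 2) t /
          (poch (-(N : ℝ) / 2) t * poch (-((N : ℝ) - 1) / 2) t)) *
          (-(1 / 4) : ℝ) ^ t / (t.factorial : ℝ) *
          (poch (-(N : ℝ)) m / (m.factorial : ℝ))) *
          (∑ j ∈ Finset.range (m + 1), poch (-(m : ℝ)) j * x ^ j / ((j.factorial : ℝ)) ^ 2)
        = ∑ j ∈ range (N + 1), Fm N x m t j := by
      intro t htt
      rw [mem_range, Nat.lt_succ_iff] at htt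
      have ht2 : m + 2 * t ≤ N := by omega
      rw [Finset.mul_sum]
      have h2 : ∀ j ∈ range (m + 1),
          ((poch (-((N : ℝ) - m) / 2) t * poch (-((N : ℝ) - m - 1) / 2) t /
            (poch (-(N : ℝ) / 2) t * poch (-((N : ℝ) - 1) / 2) t)) *
            (-(1 / 4) : ℝ) ^ t / (t.factorial : ℝ) *
            (poch (-(N : ℝ)) m / (m.factorial : ℝ))) *
            (poch (-(m : ℝ)) j * x ^ j / ((j.factorial : ℝ)) ^ 2)
          = Fm N x m t j := by
        intro j hj
        rw [mem_range, Nat.lt_succ_iff] at hj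
        rw [Fm, if_pos ⟨ht2, hj⟩]
        exact term_eq N x hm ht2 hj
      rw [Finset.sum_congr rfl h2]
      refine Finset.sum_subset (by intro a ha; rw [mem_range] at ha ⊢; omega) ?_
      intro j hj hjn
      rw [mem_range, Nat.lt_succ_iff] at hj
      rw [mem_range, Nat.lt_succ_iff] at hjn
      rw [Fm, if_neg (by omega)]
    rw [Finset.sum_congr rfl h1]
    refine Finset.sum_subset (by intro a ha; rw [mem_range] at ha ⊢; omega) ?_
    intro t ht htn
    rw [mem_range, Nat.lt_succ_iff] at htn
    refine Finset.sum_eq_zero fun j _ => ?_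
    rw [Fm, if_neg (by omega)]
  rw [Finset.sum_congr rfl stepA, Finset.sum_comm]
  have stepC : ∀ t ∈ range (N + 1),
      ∑ m ∈ range (N + 1), ∑ j ∈ range (N + 1), Fm N x m t j
      = if 2 * t ≤ N then
          (-1 : ℝ) ^ t * x ^ (N - 2 * t) /
            (4 ^ t * (t.factorial : ℝ) * (((N - 2 * t).factorial : ℝ)))
        else 0 := by
    intro t _
    rw [Finset.sum_comm]
    by_cases h2t : 2 * t ≤ N
    · rw [if_pos h2t]
      rw [Finset.sum_eq_single (N - 2 * t)]
      · exact msum_single N x t h2t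
      · intro j hj hne
        rw [mem_range, Nat.lt_succ_iff] at hj
        by_cases hle : j + 2 * t ≤ N
        · exact msum_zero N x t j hle hne
        · refine Finset.sum_eq_zero fun m _ => ?_
          rw [Fm, if_neg (by omega)]
      · intro hnotin
        exact absurd (by rw [mem_range]; omega) hnotin
    · rw [if_neg h2t]
      refine Finset.sum_eq_zero fun j _ => Finset.sum_eq_zero fun m _ => ?_
      rw [Fm, if_neg (by omega)]
  rw [Finset.sum_congr rfl stepC]
  rw [show ∑ t ∈ range (N + 1), (if 2 * t ≤ N then
      (-1 : ℝ) ^ t * x ^ (N - 2 * t) /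
        (4 ^ t * (t.factorial : ℝ) * (((N - 2 * t).factorial : ℝ)))
      else 0)
    = ∑ t ∈ range (N / 2 + 1),
      (-1 : ℝ) ^ t * x ^ (N - 2 * t) /
        (4 ^ t * (t.factorial : ℝ) * (((N - 2 * t).factorial : ℝ))) from ?_]
  · rw [hermiteP, Finset.mul_sum, Finset.mul_sum]
    refine Finset.sum_congr rfl fun k hk => ?_
    rw [mem_range, Nat.lt_succ_iff] at hk
    have h2k : 2 * k ≤ N := by omega
    have hpow : (2 : ℝ) ^ N = 2 ^ (N - 2 * k) * 4 ^ k := by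
      rw [show (4 : ℝ) = 2 ^ 2 from by norm_num, ← pow_mul, ← pow_add]
      congr 1
      omega
    have n1 := fact_ne (N - 2 * k)
    have n6 := fact_ne k
    have n4 := fact_ne N
    have h4t : ((4 : ℝ) ^ k) ≠ 0 := by positivity
    rw [mul_pow, hpow]
    field_simp
  · have hsub : range (N / 2 + 1) ⊆ range (N + 1) := by
      intro a ha; rw [mem_range] at ha ⊢; omega
    have e1 : ∑ t ∈ range (N / 2 + 1), (if 2 * t ≤ N then
        (-1 : ℝ) ^ t * x ^ (N - 2 * t) /
          (4 ^ t * (t.factorial : ℝ) * (((N - 2 * t).factorial : ℝ)))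
        else 0)
      = ∑ t ∈ range (N + 1), (if 2 * t ≤ N then
        (-1 : ℝ) ^ t * x ^ (N - 2 * t) /
          (4 ^ t * (t.factorial : ℝ) * (((N - 2 * t).factorial : ℝ)))
        else 0) := by
      refine Finset.sum_subset hsub fun t ht htn => ?_
      rw [mem_range] at htn
      rw [if_neg (by omega)]
    rw [← e1]
    refine Finset.sum_congr rfl fun t ht => ?_
    rw [mem_range, Nat.lt_succ_iff] at ht
    rw [if_pos (by omega)]
end

section
/- (Fields–Ismail expansion with Jacobi-type inner polynomials, finite version.) Let γ, θ, μ be parameters such that no denominator Pochhammer symbol below vanishes, and let (a_m), (b_m) be sequences with b_m = 0 for m > M. Then for all z, w: Σ_{m=0}^{M} a_m b_m (zw)^m / m! = Σ_{n=0}^{M} ((-z)^n / (n! (γ+n)_n)) · (Σ_{r=0}^{M-n} ((μ)_{n+r} (θ)_{n+r} / (r! (γ+2n+1)_r)) b_{n+r} z^r) · (Σ_{s=0}^{n} ((-n)_s (n+γ)_s / (s! (μ)_s (θ)_s)) a_s w^s). -/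
/-!
Comparing coefficients of `a s * b p * z ^ p * w ^ s`, the expansion amounts to the inverse
relation `∑ n, (-1)^n (-n)_s (γ+n)_s / (n! (p-n)! (γ+n)_n (γ+2n+1)_(p-n)) = δ_{sp}`.
Putting `n = s + k`, `c = γ + 2s` and `N = p - s ≥ 1`, it becomes
`∑ k, (-1)^k C(N,k) / ((c+k)_k (c+2k+1)_(N-k)) = 0`. When `(c)_(2N+1) ≠ 0` the sum telescopes:
`N` times its `k`-th term is `G (k+1) - G k` with `G k = (-1)^(k+1) k C(N,k) / (c+k)_N`, and
`G 0 = G (N+1) = 0`. The remaining admissible `c` (where some `c + 2k` vanishes) are limits of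
generic ones, and the sum is continuous there.
-/

open Finset

/-- Pochhammer (rising factorial) symbol on the complex numbers. -/
noncomputable def pochC (a : ℂ) (n : ℕ) : ℂ := ∏ i ∈ Finset.range n, (a + i)

open Nat Filter Topology

lemma pochC_eq_ascPochhammer_eval (a : ℂ) (n : ℕ) : pochC a n = (ascPochhammer ℂ n).eval a := by
  induction n with
  | zero => simp [pochC]
  | succ n ih => rw [pochC, prod_range_succ, ← pochC, ih, ascPochhammer_succ_eval]

lemma pochC_zero (a : ℂ) : pochC a 0 = 1 := prod_range_zero _

lemma pochC_succ (a : ℂ) (n : ℕ) : pochC a (n + 1) = pochC a n * (a + n) := prod_range_succ _ _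

lemma pochC_add (a : ℂ) (m n : ℕ) : pochC a (m + n) = pochC a m * pochC (a + m) n := by
  simp only [pochC, prod_range_add, Nat.cast_add, add_assoc]

lemma pochC_succ' (a : ℂ) (n : ℕ) : pochC a (n + 1) = a * pochC (a + 1) n := by
  rw [add_comm, pochC_add, pochC_succ, pochC_zero, one_mul, Nat.cast_zero, add_zero, Nat.cast_one]

lemma pochC_add_ne_zero {a : ℂ} {k m n : ℕ} (h : pochC a n ≠ 0) (hkm : k + m ≤ n) :
    pochC (a + k) m ≠ 0 := by
  obtain ⟨r, rfl⟩ := Nat.exists_eq_add_of_le hkm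
  rw [pochC_add, pochC_add] at h
  exact right_ne_zero_of_mul (left_ne_zero_of_mul h)

lemma pochC_neg_natCast (n s : ℕ) : pochC (-n) s = (-1) ^ s * n.descFactorial s := by
  rw [pochC_eq_ascPochhammer_eval, ascPochhammer_eval_neg_eq_descPochhammer,
    descPochhammer_eval_eq_descFactorial]

lemma pochC_neg_natCast_of_lt {n s : ℕ} (h : n < s) : pochC (-n) s = 0 := by
  rw [pochC_neg_natCast, Nat.descFactorial_eq_zero_iff_lt.mpr h, Nat.cast_zero, mul_zero]

lemma neg_one_pow_mul_pochC_neg_div_factorial (s k : ℕ) :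
    (-1) ^ (s + k) * pochC (-(s + k : ℕ)) s / (s + k)! = (-1) ^ k / k ! := by
  have h := Nat.factorial_mul_descFactorial (Nat.le_add_right s k)
  rw [Nat.add_sub_cancel_left] at h
  have hk : (k ! : ℂ) ≠ 0 := Nat.cast_ne_zero.mpr k.factorial_ne_zero
  have hd : ((s + k).descFactorial s : ℂ) ≠ 0 :=
    Nat.cast_ne_zero.mpr (Nat.descFactorial_eq_zero_iff_lt.not.mpr (by omega))
  rw [pochC_neg_natCast, ← h, Nat.cast_mul]
  field_simp
  rw [← pow_add, add_right_comm, ← two_mul, pow_add, pow_mul, neg_one_sq, one_pow, one_mul]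

@[fun_prop]
lemma continuous_pochC (n : ℕ) : Continuous (pochC · n) := by
  simp only [pochC_eq_ascPochhammer_eval]
  exact Polynomial.continuous _

lemma eventually_pochC_ne_zero (c : ℂ) (n : ℕ) : ∀ᶠ x in 𝓝[≠] c, pochC x n ≠ 0 := by
  have hfin : {x | (ascPochhammer ℂ n).IsRoot x}.Finite :=
    Polynomial.finite_setOfPred_isRoot (monic_ascPochhammer ℂ n).ne_zero
  filter_upwards [(nhdsNE_le_cofinite c) hfin.compl_mem_cofinite] with x hx
  rwa [pochC_eq_ascPochhammer_eval]

lemma mul_choose_div_pochC_eq_add {N k : ℕ} (hkN : k ≤ N) {c : ℂ}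
    (hc : pochC (c + k) (N + 1) ≠ 0) :
    N * ((-1) ^ k * N.choose k / (pochC (c + k) k * pochC (c + 2 * k + 1) (N - k))) =
      (-1) ^ k * ((k + 1) * N.choose (k + 1) / pochC (c + (k + 1)) N +
        k * N.choose k / pochC (c + k) N) := by
  have hsplit : pochC (c + k) (N + 1) =
      pochC (c + k) k * (c + 2 * k) * pochC (c + 2 * k + 1) (N - k) := by
    rw [show N + 1 = k + (N - k + 1) by omega, pochC_add, pochC_succ',
      show c + k + k = c + 2 * k by ring, mul_assoc]
  have hfront : pochC (c + k) (N + 1) = (c + k) * pochC (c + (k + 1)) N := by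
    rw [pochC_succ', add_assoc]
  have hback : pochC (c + k) (N + 1) = pochC (c + k) N * (c + k + N) := pochC_succ _ _
  have hc2k : c + 2 * k ≠ 0 := right_ne_zero_of_mul (left_ne_zero_of_mul (hsplit ▸ hc))
  have hck : c + k ≠ 0 := left_ne_zero_of_mul (hfront ▸ hc)
  have hckN : c + k + N ≠ 0 := right_ne_zero_of_mul (hback ▸ hc)
  have hchoose : ((k : ℂ) + 1) * N.choose (k + 1) = (N - k) * N.choose k := by
    rw [mul_comm, mul_comm (N - k : ℂ), ← Nat.cast_sub hkN]
    exact_mod_cast Nat.choose_succ_right_eq N k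
  have hAB : pochC (c + k) k * pochC (c + 2 * k + 1) (N - k) =
      pochC (c + k) (N + 1) / (c + 2 * k) :=
    eq_div_of_mul_eq hc2k (by rw [hsplit, mul_right_comm])
  have hP' : pochC (c + (k + 1)) N = pochC (c + k) (N + 1) / (c + k) :=
    eq_div_of_mul_eq hck (by rw [hfront, mul_comm])
  rw [hAB, hP', eq_div_of_mul_eq hckN hback.symm]
  field_simp
  linear_combination -(c + k) * hchoose

lemma sum_choose_div_pochC_eq_zero_of_ne_zero {N : ℕ} (hN : N ≠ 0) {c : ℂ}
    (hc : pochC c (2 * N + 1) ≠ 0) :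
    ∑ k ∈ range (N + 1), (-1) ^ k * (N.choose k : ℂ) /
      (pochC (c + k) k * pochC (c + 2 * k + 1) (N - k)) = 0 := by
  have hstep : ∀ k ∈ range (N + 1),
      N * ((-1) ^ k * N.choose k / (pochC (c + k) k * pochC (c + 2 * k + 1) (N - k))) =
        (-1) ^ (k + 1 + 1) * ((k + 1 : ℕ) * N.choose (k + 1)) / pochC (c + (k + 1 : ℕ)) N -
          (-1) ^ (k + 1) * (k * N.choose k) / pochC (c + k) N := fun k hk => by
    have hkN := Nat.lt_succ_iff.mp (mem_range.mp hk)
    rw [mul_choose_div_pochC_eq_add hkN (pochC_add_ne_zero hc (by omega))]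
    push_cast
    ring
  have htel := sum_range_sub (fun k => (-1) ^ (k + 1) * (k * N.choose k : ℂ) / pochC (c + k) N)
    (N + 1)
  rw [← sum_congr rfl hstep, ← mul_sum] at htel
  simpa [hN, Nat.choose_succ_self] using htel

lemma sum_choose_div_pochC_eq_zero {N : ℕ} (hN : N ≠ 0) {c : ℂ}
    (hc : ∀ k ≤ N, pochC (c + k) k ≠ 0 ∧ pochC (c + 2 * k + 1) (N - k) ≠ 0) :
    ∑ k ∈ range (N + 1), (-1) ^ k * (N.choose k : ℂ) /
      (pochC (c + k) k * pochC (c + 2 * k + 1) (N - k)) = 0 := by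
  set f : ℂ → ℂ := fun x => ∑ k ∈ range (N + 1), (-1) ^ k * (N.choose k : ℂ) /
      (pochC (x + k) k * pochC (x + 2 * k + 1) (N - k))
  have hf : ContinuousAt f c := by
    refine tendsto_finsetSum _ fun k hk => ContinuousAt.div (by fun_prop) (by fun_prop) ?_
    obtain ⟨hA, hB⟩ := hc k (Nat.lt_succ_iff.mp (mem_range.mp hk))
    exact mul_ne_zero hA hB
  have hgen : ∀ᶠ x in 𝓝[≠] c, f x = 0 := (eventually_pochC_ne_zero c _).mono fun x hx =>
    sum_choose_div_pochC_eq_zero_of_ne_zero hN hx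
  exact ((hf.eventuallyEq_nhds_iff_eventuallyEq_nhdsNE continuousAt_const).1 hgen).eq_of_nhds

lemma pochC_add_natCast_add (γ : ℂ) (s k : ℕ) :
    pochC (γ + (s + k : ℕ)) (s + k) = pochC (γ + (s + k : ℕ)) s * pochC (γ + 2 * s + k) k := by
  rw [pochC_add]; congr 2; push_cast; ring

lemma jacobi_kernel_term_eq {γ : ℂ} {s k N : ℕ} (hkN : k ≤ N)
    (hγ : pochC (γ + (s + k : ℕ)) (s + k) ≠ 0) :
    (-1) ^ (s + k) * pochC (-(s + k : ℕ)) s * pochC (γ + (s + k : ℕ)) s /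
        ((s + k)! * (s + N - (s + k))! * pochC (γ + (s + k : ℕ)) (s + k) *
          pochC (γ + 2 * (s + k : ℕ) + 1) (s + N - (s + k))) =
      (-1) ^ k * N.choose k /
        (pochC (γ + 2 * s + k) k * pochC (γ + 2 * s + 2 * k + 1) (N - k)) / N ! := by
  rw [pochC_add_natCast_add] at hγ ⊢
  have hN : (N ! : ℂ) ≠ 0 := Nat.cast_ne_zero.mpr N.factorial_ne_zero
  rw [show s + N - (s + k) = N - k by omega, Nat.cast_choose ℂ hkN,
    show γ + 2 * ((s + k : ℕ) : ℂ) + 1 = γ + 2 * s + 2 * k + 1 by push_cast; ring]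
  calc _ = (-1) ^ (s + k) * pochC (-(s + k : ℕ)) s / (s + k)! *
        (pochC (γ + (s + k : ℕ)) s / pochC (γ + (s + k : ℕ)) s) /
        ((N - k)! * pochC (γ + 2 * s + k) k * pochC (γ + 2 * s + 2 * k + 1) (N - k)) := by ring
    _ = _ := by
      rw [neg_one_pow_mul_pochC_neg_div_factorial, div_self (left_ne_zero_of_mul hγ)]
      field_simp

lemma sum_jacobi_kernel_eq_ite (γ : ℂ) (s p : ℕ)
    (hγ : ∀ n ≤ p, pochC (γ + n) n ≠ 0 ∧ pochC (γ + 2 * n + 1) (p - n) ≠ 0) :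
    ∑ n ∈ range (p + 1), (-1) ^ n * pochC (-n) s * pochC (γ + n) s /
      (n ! * (p - n)! * pochC (γ + n) n * pochC (γ + 2 * n + 1) (p - n)) =
        if s = p then 1 else 0 := by
  have hlow : ∀ n < s, pochC (-n) s = 0 := fun n hn => pochC_neg_natCast_of_lt hn
  rcases lt_or_ge p s with hps | hsp
  · rw [if_neg hps.ne']
    exact sum_eq_zero fun n hn => by
      rw [hlow n (by have := mem_range.mp hn; omega), mul_zero, zero_mul, zero_div]
  obtain ⟨N, rfl⟩ := Nat.exists_eq_add_of_le hsp
  rw [show s + N + 1 = s + (N + 1) by ring, sum_range_add,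
    sum_eq_zero fun n hn => by rw [hlow n (mem_range.mp hn), mul_zero, zero_mul, zero_div],
    zero_add, sum_congr rfl fun k hk => jacobi_kernel_term_eq (Nat.lt_succ_iff.mp (mem_range.mp hk))
      (hγ (s + k) (by have := mem_range.mp hk; omega)).1, ← sum_div]
  rcases eq_or_ne N 0 with rfl | hN
  · simp [pochC_zero]
  refine (div_eq_zero_iff.mpr (.inl (sum_choose_div_pochC_eq_zero hN fun k hk => ?_))).trans
    (if_neg (by omega)).symm
  have h := hγ (s + k) (by omega)
  rw [pochC_add_natCast_add, show s + N - (s + k) = N - k by omega,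
    show γ + 2 * ((s + k : ℕ) : ℂ) + 1 = γ + 2 * s + 2 * k + 1 by push_cast; ring] at h
  exact ⟨right_ne_zero_of_mul h.1, h.2⟩

lemma fields_ismail_summand_eq_sum (γ θ μ : ℂ) {n M : ℕ} (hn : n ≤ M) (a b : ℕ → ℂ) (z w : ℂ) :
    ((-z) ^ n / ((n ! : ℂ) * pochC (γ + n) n)) *
        (∑ r ∈ range (M - n + 1),
          (pochC μ (n + r) * pochC θ (n + r) / ((r ! : ℂ) * pochC (γ + 2 * n + 1) r)) *
            b (n + r) * z ^ r) *
        (∑ s ∈ range (n + 1),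
          (pochC (-(n : ℂ)) s * pochC ((n : ℂ) + γ) s /
            ((s ! : ℂ) * pochC μ s * pochC θ s)) * a s * w ^ s) =
      ∑ p ∈ Ico n (M + 1), ∑ s ∈ range (M + 1),
        a s * b p * z ^ p * w ^ s * pochC μ p * pochC θ p / (s ! * pochC μ s * pochC θ s) *
          ((-1) ^ n * pochC (-n) s * pochC (γ + n) s /
            (n ! * (p - n)! * pochC (γ + n) n * pochC (γ + 2 * n + 1) (p - n))) := by
  have hs : ∑ s ∈ range (n + 1), (pochC (-(n : ℂ)) s * pochC ((n : ℂ) + γ) s /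
        ((s ! : ℂ) * pochC μ s * pochC θ s)) * a s * w ^ s =
      ∑ s ∈ range (M + 1), (pochC (-(n : ℂ)) s * pochC ((n : ℂ) + γ) s /
        ((s ! : ℂ) * pochC μ s * pochC θ s)) * a s * w ^ s :=
    sum_subset (range_subset_range.mpr (by omega)) fun s _ hs => by
      rw [pochC_neg_natCast_of_lt (by simpa using hs)]; simp
  rw [hs, sum_Ico_eq_sum_range, show M + 1 - n = M - n + 1 by omega,
    mul_sum (range (M - n + 1)), sum_mul_sum]
  refine sum_congr rfl fun r _ => sum_congr rfl fun s _ => ?_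
  rw [Nat.add_sub_cancel_left, add_comm (n : ℂ) γ, pow_add, neg_pow]
  ring

theorem fields_ismail_jacobi_finite_general (γ θ μ : ℂ) (M : ℕ)
    (hγ₁ : ∀ n ≤ M, pochC (γ + n) n ≠ 0)
    (hγ₂ : ∀ n ≤ M, ∀ r ≤ M - n, pochC (γ + 2 * n + 1) r ≠ 0)
    (hμ : ∀ s ≤ M, pochC μ s ≠ 0) (hθ : ∀ s ≤ M, pochC θ s ≠ 0)
    (a b : ℕ → ℂ) (z w : ℂ) :
    (∑ m ∈ Finset.range (M + 1), a m * b m * (z * w) ^ m / (m.factorial : ℂ)) =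
      ∑ n ∈ Finset.range (M + 1),
        ((-z) ^ n / ((n.factorial : ℂ) * pochC (γ + n) n)) *
        (∑ r ∈ Finset.range (M - n + 1),
          (pochC μ (n + r) * pochC θ (n + r) / ((r.factorial : ℂ) * pochC (γ + 2 * n + 1) r)) *
            b (n + r) * z ^ r) *
        (∑ s ∈ Finset.range (n + 1),
          (pochC (-(n : ℂ)) s * pochC ((n : ℂ) + γ) s /
            ((s.factorial : ℂ) * pochC μ s * pochC θ s)) * a s * w ^ s) := by
  rw [sum_congr rfl fun n hn =>
      fields_ismail_summand_eq_sum γ θ μ (Nat.lt_succ_iff.mp (mem_range.mp hn)) a b z w,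
    range_eq_Ico, sum_Ico_Ico_comm, ← range_eq_Ico]
  refine sum_congr rfl fun p hp => ?_
  have hpM := Nat.lt_succ_iff.mp (mem_range.mp hp)
  have hkernel := fun s => sum_jacobi_kernel_eq_ite γ s p fun n hn =>
    ⟨hγ₁ n (by omega), hγ₂ n (by omega) _ (by omega)⟩
  rw [← range_eq_Ico, sum_comm]
  simp only [← mul_sum, hkernel, mul_ite, mul_one, mul_zero, sum_ite_eq', if_pos hp]
  field_simp [hμ p hpM, hθ p hpM]
  ring

/-- Fields–Ismail expansion (formula (1.3)), with Jacobi-type inner polynomials, finite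
version for finitely supported `b`. -/
theorem fields_ismail_jacobi_finite (γ θ μ : ℂ) (M : ℕ)
    (hγ₁ : ∀ n ≤ M, pochC (γ + n) n ≠ 0)
    (hγ₂ : ∀ n ≤ M, ∀ r ≤ M - n, pochC (γ + 2 * n + 1) r ≠ 0)
    (hμ : ∀ s ≤ M, pochC μ s ≠ 0) (hθ : ∀ s ≤ M, pochC θ s ≠ 0)
    (a b : ℕ → ℂ) (hb : ∀ m, M < m → b m = 0) (z w : ℂ) :
    (∑ m ∈ Finset.range (M + 1), a m * b m * (z * w) ^ m / (m.factorial : ℂ)) =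
      ∑ n ∈ Finset.range (M + 1),
        ((-z) ^ n / ((n.factorial : ℂ) * pochC (γ + n) n)) *
        (∑ r ∈ Finset.range (M - n + 1),
          (pochC μ (n + r) * pochC θ (n + r) / ((r.factorial : ℂ) * pochC (γ + 2 * n + 1) r)) *
            b (n + r) * z ^ r) *
        (∑ s ∈ Finset.range (n + 1),
          (pochC (-(n : ℂ)) s * pochC ((n : ℂ) + γ) s /
            ((s.factorial : ℂ) * pochC μ s * pochC θ s)) * a s * w ^ s) :=
  fields_ismail_jacobi_finite_general γ θ μ M hγ₁ hγ₂ hμ hθ a b z w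
end
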